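/- Let κ < 0 and define f_κ(s) = sinh(√(−κ) s)/√(−κ). Let Σ be a metric space with diameter ≤ π. On Σ × [0,∞), define |(ξ,s),(η,t)| by the formula f_κ'(|(ξ,s),(η,t)|) = f_κ'(s) f_κ'(t) + κ f_κ(s) f_κ(t) cos(d_Σ(ξ,η)). Then |(ξ,s),(η,t)| = 0 if and only if (ξ,s) = (η,t) or s = t = 0, and the induced function on the quotient T = Σ × [0,∞)/(Σ × {0}) is a metric (satisfies the triangle inequality). -/

import Mathlib

open Real

/-- Inverse hyperbolic cosine. -/
noncomputable def arcosh (x : ℝ) : ℝ := Real.log (x + Real.sqrt (x^2 - 1))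

/-- The distance on the `κ`-cone (`κ < 0`) over a metric space, defined by the
hyperbolic law of cosines: `f_κ'(d) = f_κ'(s) f_κ'(t) + κ f_κ(s) f_κ(t) cos dS`,
with `f_κ(s) = sinh(√(−κ) s)/√(−κ)`, `f_κ'(s) = cosh(√(−κ) s)`. -/
noncomputable def kappaDist (κ dS s t : ℝ) : ℝ :=
  (1 / Real.sqrt (-κ)) *
    _root_.arcosh (Real.cosh (Real.sqrt (-κ) * s) * Real.cosh (Real.sqrt (-κ) * t)
      - Real.sinh (Real.sqrt (-κ) * s) * Real.sinh (Real.sqrt (-κ) * t) * Real.cos dS)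

/-!
Scaling by `√(−κ)` reduces everything to the hyperbolic plane of curvature `−1`, where
`kappaDist` is the distance `hypDist a b θ` between points with polar coordinates `(a, φ)` and
`(b, φ + θ)`. Realising such points on the hyperboloid `x₀² − x₁² − x₂² = 1`, the Gram
determinant of three of them for the Lorentz form is `det (p, q, r)² ≥ 0`, which rearranges to
`cosh d(p, r) ≤ cosh (d(p, q) + d(q, r))`. For cone points with angles `t₁, t₂, t₃ ≤ π` and
`t₃ ≤ t₁ + t₂`, the plane triangle with angles `α ≤ t₁`, `β ≤ t₂` at the apex and `α + β ≥ t₃`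
(`α + β = π` if `t₁ + t₂ > π`) only shortens the two sides and lengthens the third, since
`hypDist a b θ` is monotone in `θ ∈ [0, π]`.
-/

noncomputable section

def lorentz (p q : Fin 3 → ℝ) : ℝ := p 0 * q 0 - p 1 * q 1 - p 2 * q 2

theorem lorentz_gram_nonpos {p q r : Fin 3 → ℝ} (hp : lorentz p p = 1) (hq : lorentz q q = 1)
    (hr : lorentz r r = 1) :
    lorentz p q ^ 2 + lorentz q r ^ 2 + lorentz p r ^ 2
      - 2 * lorentz p q * lorentz q r * lorentz p r - 1 ≤ 0 := by
  have gram_det : lorentz p p * lorentz q q * lorentz r r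
      + 2 * lorentz p q * lorentz q r * lorentz p r - lorentz p p * lorentz q r ^ 2
      - lorentz q q * lorentz p r ^ 2 - lorentz r r * lorentz p q ^ 2
      = (Matrix.of ![p, q, r]).det ^ 2 := by
    simp only [lorentz, Matrix.det_fin_three, Matrix.of_apply, Matrix.cons_val_zero,
      Matrix.cons_val_one, Matrix.cons_val_two, Matrix.head_cons, Matrix.tail_cons]
    ring
  rw [hp, hq, hr] at gram_det
  nlinarith [sq_nonneg ((Matrix.of ![p, q, r]).det)]

theorem arcosh_le_add_of_gram_nonpos {x y z : ℝ} (hx : 1 ≤ x) (hy : 1 ≤ y) (hz : 1 ≤ z)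
    (hgram : x ^ 2 + y ^ 2 + z ^ 2 - 2 * x * y * z - 1 ≤ 0) :
    Real.arcosh z ≤ Real.arcosh x + Real.arcosh y := by
  have hx' : 0 ≤ x ^ 2 - 1 := by nlinarith
  have hy' : 0 ≤ y ^ 2 - 1 := by nlinarith
  have hsum := add_nonneg (Real.arcosh_nonneg hx) (Real.arcosh_nonneg hy)
  have hz_le : z ≤ cosh (Real.arcosh x + Real.arcosh y) := by
    rw [cosh_add, Real.cosh_arcosh hx, Real.cosh_arcosh hy, Real.sinh_arcosh hx,
      Real.sinh_arcosh hy, ← Real.sqrt_mul hx']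
    have : |z - x * y| ≤ √((x ^ 2 - 1) * (y ^ 2 - 1)) := Real.abs_le_sqrt (by nlinarith)
    linarith [le_abs_self (z - x * y)]
  calc Real.arcosh z ≤ Real.arcosh (cosh (Real.arcosh x + Real.arcosh y)) :=
        (Real.arcosh_le_arcosh (by linarith) (cosh_pos _)).2 hz_le
    _ = Real.arcosh x + Real.arcosh y := Real.arcosh_cosh hsum

/-- `cosh` of the third side of a hyperbolic triangle whose sides `a`, `b` enclose the angle `θ`. -/
def coshLaw (a b θ : ℝ) : ℝ := cosh a * cosh b - sinh a * sinh b * cos θ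

def hypDist (a b θ : ℝ) : ℝ := Real.arcosh (coshLaw a b θ)

def polarPoint (a φ : ℝ) : Fin 3 → ℝ := ![cosh a, sinh a * cos φ, sinh a * sin φ]

theorem lorentz_polarPoint (a b φ ψ : ℝ) :
    lorentz (polarPoint a φ) (polarPoint b ψ) = coshLaw a b (φ - ψ) := by
  simp only [lorentz, polarPoint, coshLaw, cos_sub, Matrix.cons_val_zero, Matrix.cons_val_one,
    Matrix.cons_val_two, Matrix.head_cons, Matrix.tail_cons]
  ring

theorem lorentz_polarPoint_self (a φ : ℝ) : lorentz (polarPoint a φ) (polarPoint a φ) = 1 := by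
  rw [lorentz_polarPoint, sub_self, coshLaw, cos_zero, mul_one, ← cosh_sub, sub_self, cosh_zero]

theorem coshLaw_comm (a b θ : ℝ) : coshLaw a b θ = coshLaw b a θ := by
  simp only [coshLaw, mul_comm]

theorem coshLaw_eq_cosh_sub_add (a b θ : ℝ) :
    coshLaw a b θ = cosh (a - b) + sinh a * sinh b * (1 - cos θ) := by
  rw [coshLaw, cosh_sub]
  ring

section NonnegRadii

variable {a b c : ℝ} (ha : 0 ≤ a) (hb : 0 ≤ b)
include ha hb

theorem sinh_mul_sinh_mul_one_sub_cos_nonneg (θ : ℝ) : 0 ≤ sinh a * sinh b * (1 - cos θ) :=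
  mul_nonneg (mul_nonneg (sinh_nonneg_iff.2 ha) (sinh_nonneg_iff.2 hb))
    (sub_nonneg.2 (cos_le_one θ))

theorem one_le_coshLaw (θ : ℝ) : 1 ≤ coshLaw a b θ := by
  rw [coshLaw_eq_cosh_sub_add]
  linarith [one_le_cosh (a - b), sinh_mul_sinh_mul_one_sub_cos_nonneg ha hb θ]

theorem coshLaw_eq_one_iff {θ : ℝ} (hθ₀ : 0 ≤ θ) (hθ : θ < 2 * π) :
    coshLaw a b θ = 1 ↔ (θ = 0 ∧ a = b) ∨ (a = 0 ∧ b = 0) := by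
  have hcosh := one_le_cosh (a - b)
  have hsinh := sinh_mul_sinh_mul_one_sub_cos_nonneg ha hb θ
  have hcos : cos θ = 1 ↔ θ = 0 := cos_eq_one_iff_of_lt_of_lt (by linarith [pi_pos]) hθ
  rw [coshLaw_eq_cosh_sub_add]
  constructor
  · intro h
    have hab : a = b := by
      by_contra hne
      linarith [one_lt_cosh.2 (sub_ne_zero.2 hne)]
    subst hab
    have : sinh a * sinh a * (1 - cos θ) = 0 := by rw [sub_self, cosh_zero] at h; linarith
    rcases mul_eq_zero.1 this with h0 | h0
    · have ha0 : a = 0 := sinh_eq_zero.1 (mul_self_eq_zero.1 h0)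
      exact Or.inr ⟨ha0, ha0⟩
    · exact Or.inl ⟨hcos.1 (by linarith), rfl⟩
  · rintro (⟨rfl, rfl⟩ | ⟨rfl, rfl⟩) <;> simp

theorem hypDist_le_hypDist_of_cos_le {θ θ' : ℝ} (h : cos θ ≤ cos θ') :
    hypDist a b θ' ≤ hypDist a b θ := by
  refine (Real.arcosh_le_arcosh (by linarith [one_le_coshLaw ha hb θ'])
    (by linarith [one_le_coshLaw ha hb θ])).2 ?_
  simp only [coshLaw]
  nlinarith [mul_nonneg (sinh_nonneg_iff.2 ha) (sinh_nonneg_iff.2 hb)]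

theorem hypDist_add_le (hc : 0 ≤ c) (α β : ℝ) :
    hypDist a c (α + β) ≤ hypDist a b α + hypDist b c β := by
  have hgram := lorentz_gram_nonpos (lorentz_polarPoint_self a α) (lorentz_polarPoint_self b 0)
    (lorentz_polarPoint_self c (-β))
  simp only [lorentz_polarPoint, sub_zero, sub_neg_eq_add, zero_add] at hgram
  exact arcosh_le_add_of_gram_nonpos (one_le_coshLaw ha hb α) (one_le_coshLaw hb hc β)
    (one_le_coshLaw ha hc (α + β)) (by linarith)

theorem hypDist_le_add (hc : 0 ≤ c) {t₁ t₂ t₃ : ℝ} (ht₁ : t₁ ≤ π) (ht₂ : t₂ ≤ π)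
    (ht₃ : 0 ≤ t₃) (htri : t₃ ≤ t₁ + t₂) :
    hypDist a c t₃ ≤ hypDist a b t₁ + hypDist b c t₂ := by
  obtain ⟨α, β, hα, hβ, hαβ⟩ :
      ∃ α β : ℝ, cos t₁ ≤ cos α ∧ cos t₂ ≤ cos β ∧ cos (α + β) ≤ cos t₃ := by
    rcases le_or_gt (t₁ + t₂) π with hle | hgt
    · exact ⟨t₁, t₂, le_rfl, le_rfl, cos_le_cos_of_nonneg_of_le_pi ht₃ hle htri⟩
    · refine ⟨π - t₂, t₂, cos_le_cos_of_nonneg_of_le_pi (by linarith) ht₁ (by linarith),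
        le_rfl, ?_⟩
      rw [sub_add_cancel, cos_pi]
      exact neg_one_le_cos t₃
  calc hypDist a c t₃ ≤ hypDist a c (α + β) := hypDist_le_hypDist_of_cos_le ha hc hαβ
    _ ≤ hypDist a b α + hypDist b c β := hypDist_add_le ha hb hc α β
    _ ≤ hypDist a b t₁ + hypDist b c t₂ :=
      add_le_add (hypDist_le_hypDist_of_cos_le ha hb hα) (hypDist_le_hypDist_of_cos_le hb hc hβ)

end NonnegRadii

theorem kappaDist_eq_hypDist (κ dS s t : ℝ) :
    kappaDist κ dS s t = (√(-κ))⁻¹ * hypDist (√(-κ) * s) (√(-κ) * t) dS := by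
  rw [kappaDist, one_div]
  -- `_root_.arcosh` is Mathlib's `Real.arcosh` by definition
  rfl

end

/-- for `κ < 0` and a metric space `Σ` of diameter `≤ π`, the function
`|(ξ,s),(η,t)|` on `Σ × [0,∞)` defined by
`f_κ'(|(ξ,s),(η,t)|) = f_κ'(s) f_κ'(t) + κ f_κ(s) f_κ(t) cos d_Σ(ξ,η)`
vanishes iff `(ξ,s) = (η,t)` or `s = t = 0`, is symmetric, and satisfies the
triangle inequality; hence it induces a metric on the quotient
`Σ × [0,∞)/(Σ × {0})` (the `κ`-cone over `Σ`). -/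
theorem stmt11 {S : Type*} [MetricSpace S] (κ : ℝ) (hκ : κ < 0)
    (hdiam : ∀ x y : S, dist x y ≤ π) :
    (∀ (ξ η : S) (s t : ℝ), 0 ≤ s → 0 ≤ t →
      (kappaDist κ (dist ξ η) s t = 0 ↔ ((ξ = η ∧ s = t) ∨ (s = 0 ∧ t = 0)))) ∧
    (∀ (ξ η : S) (s t : ℝ), 0 ≤ s → 0 ≤ t →
      kappaDist κ (dist ξ η) s t = kappaDist κ (dist η ξ) t s) ∧
    (∀ (ξ η ρ : S) (s t u : ℝ), 0 ≤ s → 0 ≤ t → 0 ≤ u →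
      kappaDist κ (dist ξ ρ) s u ≤
        kappaDist κ (dist ξ η) s t + kappaDist κ (dist η ρ) t u) := by
  have hr : 0 < √(-κ) := Real.sqrt_pos.2 (neg_pos.2 hκ)
  have hscale : ∀ {s : ℝ}, 0 ≤ s → 0 ≤ √(-κ) * s := mul_nonneg hr.le
  refine ⟨fun ξ η s t hs ht => ?_, fun ξ η s t _ _ => ?_, fun ξ η ρ s t u hs ht hu => ?_⟩
  · have hdist : dist ξ η < 2 * π := by linarith [hdiam ξ η, pi_pos]
    rw [kappaDist_eq_hypDist, mul_eq_zero, hypDist,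
      Real.arcosh_eq_zero_iff (one_le_coshLaw (hscale hs) (hscale ht) _),
      coshLaw_eq_one_iff (hscale hs) (hscale ht) dist_nonneg hdist, dist_eq_zero]
    simp [hr.ne']
  · rw [kappaDist_eq_hypDist, kappaDist_eq_hypDist, hypDist, hypDist, dist_comm, coshLaw_comm]
  · rw [kappaDist_eq_hypDist, kappaDist_eq_hypDist, kappaDist_eq_hypDist, ← mul_add]
    exact mul_le_mul_of_nonneg_left (hypDist_le_add (hscale hs) (hscale ht) (hscale hu)
      (hdiam ξ η) (hdiam η ρ) dist_nonneg (dist_triangle ξ η ρ)) (inv_nonneg.2 hr.le)
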